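/- Adding edges between distinct connected components of a graph increases the burning number by at most the number of edges added: if G is obtained from H by adding j edges, then b(H) ≤ b(G) + j. -/

import Mathlib

open SimpleGraph

/-- The set of vertices burned after `t` rounds of the burning process on `G`,
where `s i` is the source of fire chosen in round `i + 1`. -/
def burnSet {V : Type*} (G : SimpleGraph V) (s : ℕ → V) : ℕ → Set V
  | 0 => ∅
  | t + 1 => burnSet G s t ∪ {w | ∃ u ∈ burnSet G s t, G.Adj u w} ∪ {s t}

/-- The partial burning number `b(G, S)`: the least number of rounds needed to
burn every vertex of `S`. -/
noncomputable def pburn {V : Type*} (G : SimpleGraph V) (S : Set V) : ℕ :=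
  sInf {r | ∃ s : ℕ → V, S ⊆ burnSet G s r}

/-- The burning number `b(G)`. -/
noncomputable def burn {V : Type*} (G : SimpleGraph V) : ℕ :=
  pburn G Set.univ

/-- The ball of radius `t` around `v` in graph distance. -/
def gball {V : Type*} (G : SimpleGraph V) (v : V) (t : ℕ) : Set V :=
  {w | G.dist v w ≤ t}

/-- The `m × n` Cartesian grid `P_m □ P_n`; the first coordinate is the height (row). -/
def gridGraph (m n : ℕ) : SimpleGraph (Fin m × Fin n) :=
  (pathGraph m) □ (pathGraph n)

/-
Deleting a single edge `ab` costs at most one round. Given a burning sequence for `G`, name the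
endpoints so that `b` catches fire no later than `a`, and light `a` in an extra first round. In
`G` the edge `ab` matters only when it carries fire from `a` to `b`, which is redundant because
`b` is already burning by then, or from `b` to `a`, which the early source at `a` supersedes. So
after `t + 1` rounds the new sequence has burned everything the old one burned after `t` rounds.
Deleting the `j` added edges one at a time gives the bound.
-/

theorem Monotone.mem_imp_or_mem_imp {ι α : Type*} [LinearOrder ι] {B : ι → Set α}
    (hB : Monotone B) (a b : α) :
    (∀ t, a ∈ B t → b ∈ B t) ∨ (∀ t, b ∈ B t → a ∈ B t) := by
  by_contra! h
  obtain ⟨⟨t₁, ha₁, hb₁⟩, ⟨t₂, hb₂, ha₂⟩⟩ := h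
  rcases le_total t₁ t₂ with h | h
  · exact ha₂ (hB h ha₁)
  · exact hb₁ (hB h hb₂)

section BurnSet

variable {V : Type*} {G : SimpleGraph V} {s : ℕ → V}

theorem burnSet_subset_succ (G : SimpleGraph V) (s : ℕ → V) (t : ℕ) :
    burnSet G s t ⊆ burnSet G s (t + 1) := fun _ hw => Or.inl (Or.inl hw)

theorem burnSet_monotone (G : SimpleGraph V) (s : ℕ → V) : Monotone (burnSet G s) :=
  monotone_nat_of_le_succ (burnSet_subset_succ G s)

theorem source_mem_burnSet (G : SimpleGraph V) (s : ℕ → V) (t : ℕ) :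
    s t ∈ burnSet G s (t + 1) := Or.inr rfl

theorem burnSet_mono_left {H : SimpleGraph V} (hle : H ≤ G) (s : ℕ → V) (t : ℕ) :
    burnSet H s t ⊆ burnSet G s t := by
  induction t with
  | zero => exact subset_rfl
  | succ t ih =>
    rintro w ((hw | ⟨u, hu, huw⟩) | hw)
    · exact Or.inl (Or.inl (ih hw))
    · exact Or.inl (Or.inr ⟨u, ih hu, hle huw⟩)
    · exact Or.inr hw

theorem burnSet_subset_deleteEdges_cons {a b : V}
    (hab : ∀ t, a ∈ burnSet G s t → b ∈ burnSet G s t) (t : ℕ) :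
    burnSet G s t ⊆
      burnSet (G.deleteEdges {s(a, b)}) (fun | 0 => a | i + 1 => s i) (t + 1) := by
  set G' := G.deleteEdges {s(a, b)}
  set s' : ℕ → V := fun | 0 => a | i + 1 => s i
  induction t with
  | zero => exact Set.empty_subset _
  | succ t ih =>
    rintro w ((hw | ⟨u, hu, huw⟩) | rfl)
    · exact burnSet_subset_succ G' s' _ (ih hw)
    · by_cases he : s(u, w) = s(a, b)
      · rcases Sym2.eq_iff.mp he with ⟨rfl, rfl⟩ | ⟨rfl, rfl⟩
        · exact burnSet_subset_succ G' s' _ (ih (hab t hu))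
        · exact burnSet_monotone G' s' (by omega) (source_mem_burnSet G' s' 0)
      · exact Or.inl (Or.inr ⟨u, ih hu, deleteEdges_adj.mpr ⟨huw, he⟩⟩)
    · exact source_mem_burnSet G' s' (t + 1)

theorem exists_burnSet_subset_deleteEdges_succ (G : SimpleGraph V) (s : ℕ → V) (e : Sym2 V) :
    ∃ s' : ℕ → V, ∀ t, burnSet G s t ⊆ burnSet (G.deleteEdges {e}) s' (t + 1) := by
  induction e using Sym2.ind with
  | _ a b =>
    wlog hab : ∀ t, a ∈ burnSet G s t → b ∈ burnSet G s t generalizing a b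
    · rw [Sym2.eq_swap]
      exact this b a (((burnSet_monotone G s).mem_imp_or_mem_imp a b).resolve_left hab)
    exact ⟨_, burnSet_subset_deleteEdges_cons hab⟩

end BurnSet

section Pburn

variable {V : Type*}

theorem pburn_deleteEdges_singleton_le (G : SimpleGraph V) (S : Set V) (e : Sym2 V) :
    pburn (G.deleteEdges {e}) S ≤ pburn G S + 1 := by
  rcases Set.eq_empty_or_nonempty {r | ∃ s : ℕ → V, S ⊆ burnSet G s r} with h | h
  · have h' : {r | ∃ s : ℕ → V, S ⊆ burnSet (G.deleteEdges {e}) s r} = ∅ :=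
      Set.eq_empty_of_subset_empty fun r ⟨s, hs⟩ =>
        h ▸ ⟨s, hs.trans (burnSet_mono_left (G.deleteEdges_le _) s r)⟩
    simp [pburn, h']
  · obtain ⟨s, hs⟩ := Nat.sInf_mem h
    obtain ⟨s', hs'⟩ := exists_burnSet_subset_deleteEdges_succ G s e
    exact Nat.sInf_le ⟨s', hs.trans (hs' _)⟩

theorem pburn_deleteEdges_le_add_ncard (G : SimpleGraph V) (S : Set V) {D : Set (Sym2 V)}
    (hD : D.Finite) : pburn (G.deleteEdges D) S ≤ pburn G S + D.ncard := by
  induction D, hD using Set.Finite.induction_on with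
  | empty => simp
  | @insert e D he hD ih =>
    calc pburn (G.deleteEdges (insert e D)) S
        = pburn ((G.deleteEdges D).deleteEdges {e}) S := by
          rw [deleteEdges_deleteEdges, Set.union_singleton]
      _ ≤ pburn (G.deleteEdges D) S + 1 := pburn_deleteEdges_singleton_le _ S e
      _ ≤ pburn G S + (insert e D).ncard := by
          rw [Set.ncard_insert_of_notMem he hD]
          omega

end Pburn

/-- If `G` is obtained from `H` by adding `j` edges, then `b(H) ≤ b(G) + j`. -/
theorem burn_add_edges {V : Type*} [Fintype V] (H G : SimpleGraph V) (hle : H ≤ G)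
    (j : ℕ) (hj : G.edgeSet.ncard = H.edgeSet.ncard + j) :
    burn H ≤ burn G + j := by
  have hcard : (G.edgeSet \ H.edgeSet).ncard = j := by
    rw [Set.ncard_sdiff (edgeSet_mono hle)]
    omega
  have h := pburn_deleteEdges_le_add_ncard G Set.univ (Set.toFinite (G.edgeSet \ H.edgeSet))
  rwa [deleteEdges_sdiff_eq_of_le hle, hcard] at h
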